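/- arXiv:0911.1739 — 2 statements merged into one kernel-verified Lean document; each statement's English description precedes it below -/
import Mathlib

section
/- Let n ≥ 2 and let A, B be real symmetric n×n matrices with A𝟏 = λ₀𝟏 = B𝟏 for some λ₀ ∈ ℝ and dim ker(A − λ₀ I_n) = 1. If A and B have the same characteristic polynomial, then the three subspaces P₀(A,A), P₀(A,B), P₀(B,B) have the same dimension. -/
open Matrix MeasureTheory ENNReal

/-- Frobenius norm of a real square matrix: ‖X‖_F = √(tr(X Xᵀ)). -/
noncomputable def frob {n : ℕ} (X : Matrix (Fin n) (Fin n) ℝ) : ℝ :=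
  Real.sqrt ((X * Xᵀ).trace)

/-- A permutation matrix: a 0-1 matrix with exactly one 1 in each row and each column. -/
def IsPermMatrix {n : ℕ} (P : Matrix (Fin n) (Fin n) ℝ) : Prop :=
  (∀ i j, P i j = 0 ∨ P i j = 1) ∧ (∀ i, ∃! j, P i j = 1) ∧ (∀ j, ∃! i, P i j = 1)

/-- The matrix J_n all of whose entries are 1/n. -/
noncomputable def Jmat (n : ℕ) : Matrix (Fin n) (Fin n) ℝ := Matrix.of fun _ _ => (1 / n : ℝ)

/-- P₀(S,T) = {X ∈ M_n : SX - XT = 0}, where M_n is the set of matrices with all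
row and column sums zero. -/
def P0 {n : ℕ} (S T : Matrix (Fin n) (Fin n) ℝ) : Set (Matrix (Fin n) (Fin n) ℝ) :=
  {X | X *ᵥ 1 = 0 ∧ Xᵀ *ᵥ 1 = 0 ∧ S * X - X * T = 0}

/-- P(S,T) = {X ∈ P₀(S,T) : every entry of X is ≥ -1/n}. -/
def Pset {n : ℕ} (S T : Matrix (Fin n) (Fin n) ℝ) : Set (Matrix (Fin n) (Fin n) ℝ) :=
  {X | X ∈ P0 S T ∧ ∀ i j, -(1 / n : ℝ) ≤ X i j}

/-- P₀(S,T) as a linear subspace of the space of real n×n matrices. -/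
def P0sub {n : ℕ} (S T : Matrix (Fin n) (Fin n) ℝ) :
    Submodule ℝ (Matrix (Fin n) (Fin n) ℝ) where
  carrier := P0 S T
  add_mem' := by
    rintro X Y ⟨h1, h2, h3⟩ ⟨g1, g2, g3⟩
    refine ⟨?_, ?_, ?_⟩
    · rw [Matrix.add_mulVec, h1, g1, add_zero]
    · rw [Matrix.transpose_add, Matrix.add_mulVec, h2, g2, add_zero]
    · have h : S * (X + Y) - (X + Y) * T = (S * X - X * T) + (S * Y - Y * T) := by
        rw [Matrix.mul_add, Matrix.add_mul]; abel
      rw [h, h3, g3, add_zero]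
  zero_mem' := by
    refine ⟨?_, ?_, ?_⟩ <;> simp [P0]
  smul_mem' := by
    rintro c X ⟨h1, h2, h3⟩
    refine ⟨?_, ?_, ?_⟩
    · rw [Matrix.smul_mulVec, h1, smul_zero]
    · rw [Matrix.transpose_smul, Matrix.smul_mulVec, h2, smul_zero]
    · have h : S * (c • X) - (c • X) * T = c • (S * X - X * T) := by
        rw [Matrix.mul_smul, Matrix.smul_mul, smul_sub]
      rw [h, h3, smul_zero]

/-- The linear isometric identification of n×n matrices, endowed with the
Frobenius-norm metric, with the Euclidean space ℝ^(n²); Hausdorff measures of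
sets of matrices with respect to the Frobenius metric are computed via this map. -/
noncomputable def matEuclid (n : ℕ) (X : Matrix (Fin n) (Fin n) ℝ) :
    EuclideanSpace ℝ (Fin n × Fin n) :=
  (EuclideanSpace.equiv (Fin n × Fin n) ℝ).symm (fun p => X p.1 p.2)
lemma finrank_P0_left {n : ℕ} (S T Q : Matrix (Fin n) (Fin n) ℝ)
    (h1 : Qᵀ * Q = 1) (h2 : Q * Qᵀ = 1) (hc : S * Q = Q * T)
    (hq1 : Q *ᵥ 1 = 1) (hq2 : Qᵀ *ᵥ 1 = 1) :
    Module.finrank ℝ (P0sub S S) = Module.finrank ℝ (P0sub S T) := by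
  have hc' : T * Qᵀ = Qᵀ * S := by
    have : Qᵀ * (S * Q) * Qᵀ = Qᵀ * (Q * T) * Qᵀ := by rw [hc]
    calc T * Qᵀ = Qᵀ * (Q * T) * Qᵀ := by
          rw [← mul_assoc, h1, one_mul]
      _ = Qᵀ * (S * Q) * Qᵀ := by rw [hc]
      _ = Qᵀ * S * (Q * Qᵀ) := by noncomm_ring
      _ = Qᵀ * S := by rw [h2, mul_one]
  refine LinearEquiv.finrank_eq ?_
  refine
  { toFun := fun X => ⟨X.1 * Q, ?_, ?_, ?_⟩
    invFun := fun X => ⟨X.1 * Qᵀ, ?_, ?_, ?_⟩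
    map_add' := fun X Y => by ext1; simp [add_mul]
    map_smul' := fun c X => by ext1; simp [Matrix.smul_mul]
    left_inv := fun X => by ext1; simp [mul_assoc, h2]
    right_inv := fun X => by ext1; simp [mul_assoc, h1] }
  · rw [← Matrix.mulVec_mulVec, hq1, X.2.1]
  · rw [Matrix.transpose_mul, ← Matrix.mulVec_mulVec, X.2.2.1, Matrix.mulVec_zero]
  · have h3 : S * X.1 = X.1 * S := sub_eq_zero.mp X.2.2.2
    calc S * (X.1 * Q) - X.1 * Q * T = (S * X.1) * Q - X.1 * (Q * T) := by noncomm_ring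
      _ = X.1 * S * Q - X.1 * (S * Q) := by rw [h3, hc]
      _ = 0 := by noncomm_ring
  · rw [← Matrix.mulVec_mulVec, hq2, X.2.1]
  · rw [Matrix.transpose_mul, Matrix.transpose_transpose, ← Matrix.mulVec_mulVec, X.2.2.1,
      Matrix.mulVec_zero]
  · have h3 : S * X.1 = X.1 * T := sub_eq_zero.mp X.2.2.2
    calc S * (X.1 * Qᵀ) - X.1 * Qᵀ * S = (S * X.1) * Qᵀ - X.1 * (Qᵀ * S) := by noncomm_ring
      _ = X.1 * T * Qᵀ - X.1 * (T * Qᵀ) := by rw [h3, hc']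
      _ = 0 := by noncomm_ring

lemma finrank_P0_right {n : ℕ} (S T Q : Matrix (Fin n) (Fin n) ℝ)
    (h1 : Qᵀ * Q = 1) (h2 : Q * Qᵀ = 1) (hc : S * Q = Q * T)
    (hq1 : Q *ᵥ 1 = 1) (hq2 : Qᵀ *ᵥ 1 = 1) :
    Module.finrank ℝ (P0sub S T) = Module.finrank ℝ (P0sub T T) := by
  have hc' : T * Qᵀ = Qᵀ * S := by
    calc T * Qᵀ = Qᵀ * (Q * T) * Qᵀ := by rw [← mul_assoc, h1, one_mul]
      _ = Qᵀ * (S * Q) * Qᵀ := by rw [hc]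
      _ = Qᵀ * S * (Q * Qᵀ) := by noncomm_ring
      _ = Qᵀ * S := by rw [h2, mul_one]
  refine LinearEquiv.finrank_eq ?_
  refine
  { toFun := fun X => ⟨Qᵀ * X.1, ?_, ?_, ?_⟩
    invFun := fun X => ⟨Q * X.1, ?_, ?_, ?_⟩
    map_add' := fun X Y => by ext1; simp [mul_add]
    map_smul' := fun c X => by ext1; simp [Matrix.mul_smul]
    left_inv := fun X => by ext1; simp [← mul_assoc, h2]
    right_inv := fun X => by ext1; simp [← mul_assoc, h1] }
  · rw [← Matrix.mulVec_mulVec, X.2.1, Matrix.mulVec_zero]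
  · rw [Matrix.transpose_mul, Matrix.transpose_transpose, ← Matrix.mulVec_mulVec, hq1, X.2.2.1]
  · have h3 : S * X.1 = X.1 * T := sub_eq_zero.mp X.2.2.2
    calc T * (Qᵀ * X.1) - Qᵀ * X.1 * T = (T * Qᵀ) * X.1 - Qᵀ * (X.1 * T) := by noncomm_ring
      _ = Qᵀ * (X.1 * T) - Qᵀ * (X.1 * T) := by rw [hc', mul_assoc, h3]
      _ = 0 := by noncomm_ring
  · rw [← Matrix.mulVec_mulVec, X.2.1, Matrix.mulVec_zero]
  · rw [Matrix.transpose_mul, ← Matrix.mulVec_mulVec, hq2, X.2.2.1]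
  · have h3 : T * X.1 = X.1 * T := sub_eq_zero.mp X.2.2.2
    calc S * (Q * X.1) - Q * X.1 * T = (S * Q) * X.1 - Q * (X.1 * T) := by noncomm_ring
      _ = Q * (X.1 * T) - Q * (X.1 * T) := by rw [hc, mul_assoc, h3]
      _ = 0 := by noncomm_ring

open Polynomial in
lemma my_charpoly_conj {n : ℕ} (U V M : Matrix (Fin n) (Fin n) ℝ) (hUV : U * V = 1) :
    (U * M * V).charpoly = M.charpoly := by
  have h1 : Commute (Matrix.scalar (Fin n) (X : ℝ[X])) ((C : ℝ →+* ℝ[X]).mapMatrix U) :=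
    Matrix.scalar_commute _ (fun r => Commute.all _ _) _
  have key : (C : ℝ →+* ℝ[X]).mapMatrix U * charmatrix M * (C : ℝ →+* ℝ[X]).mapMatrix V
      = charmatrix (U * M * V) := by
    calc (C : ℝ →+* ℝ[X]).mapMatrix U * charmatrix M * (C : ℝ →+* ℝ[X]).mapMatrix V
        = (C : ℝ →+* ℝ[X]).mapMatrix U * Matrix.scalar (Fin n) X * (C : ℝ →+* ℝ[X]).mapMatrix V
          - (C : ℝ →+* ℝ[X]).mapMatrix U * (C : ℝ →+* ℝ[X]).mapMatrix M
            * (C : ℝ →+* ℝ[X]).mapMatrix V := by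
          rw [charmatrix]; noncomm_ring
      _ = Matrix.scalar (Fin n) X * ((C : ℝ →+* ℝ[X]).mapMatrix (U * V))
          - (C : ℝ →+* ℝ[X]).mapMatrix (U * M * V) := by
          rw [← h1.eq]; simp [_root_.map_mul, mul_assoc]
      _ = charmatrix (U * M * V) := by rw [hUV, _root_.map_one, mul_one, charmatrix]
  have hdet : ((C : ℝ →+* ℝ[X]).mapMatrix U).det * ((C : ℝ →+* ℝ[X]).mapMatrix V).det = 1 := by
    rw [← Matrix.det_mul, ← _root_.map_mul, hUV, _root_.map_one, Matrix.det_one]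
  rw [Matrix.charpoly, Matrix.charpoly, ← key, Matrix.det_mul, Matrix.det_mul]
  ring_nf
  rw [mul_comm, ← mul_assoc, mul_comm (((C : ℝ →+* ℝ[X]).mapMatrix V).det)]
  rw [hdet, one_mul]

open Polynomial in
lemma my_charpoly_diagonal {n : ℕ} (d : Fin n → ℝ) :
    (Matrix.diagonal d).charpoly = ∏ i, (X - C (d i)) := by
  rw [Matrix.charpoly]
  have h : charmatrix (Matrix.diagonal d) = Matrix.diagonal (fun i => X - C (d i)) := by
    ext i j
    by_cases h : i = j
    · subst h; simp [Matrix.charmatrix_apply_eq]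
    · simp [Matrix.charmatrix_apply_ne _ _ _ h, Matrix.diagonal_apply_ne _ h]
  rw [h, Matrix.det_diagonal]

lemma exists_perm_comp {n : ℕ} (f g : Fin n → ℝ)
    (h : (Finset.univ.val.map f) = (Finset.univ.val.map g)) :
    ∃ σ : Equiv.Perm (Fin n), ∀ i, f (σ i) = g i := by
  have hperm : List.Perm (List.ofFn f) (List.ofFn g) := by
    rw [← Multiset.coe_eq_coe, ← Fin.univ_val_map, ← Fin.univ_val_map]; exact h
  have h12 : f ∘ (Tuple.sort f) = g ∘ (Tuple.sort g) := by
    apply List.ofFn_injective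
    exact List.Perm.eq_of_sortedLE
      (List.sortedLE_ofFn_iff.mpr (Tuple.monotone_sort f))
      (List.sortedLE_ofFn_iff.mpr (Tuple.monotone_sort g))
      (((Tuple.sort f).ofFn_comp_perm f).trans
        (hperm.trans (((Tuple.sort g).ofFn_comp_perm g).symm)))
  refine ⟨(Tuple.sort g).symm.trans (Tuple.sort f), fun i => ?_⟩
  have := congrFun h12 ((Tuple.sort g).symm i)
  simpa using this

open Polynomial in
lemma charpoly_roots_eq {n : ℕ} (M : Matrix (Fin n) (Fin n) ℝ) (hM : M.IsHermitian) :
    M.charpoly.roots = Finset.univ.val.map hM.eigenvalues := by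
  have hU : (hM.eigenvectorUnitary : Matrix (Fin n) (Fin n) ℝ) *
      star (hM.eigenvectorUnitary : Matrix (Fin n) (Fin n) ℝ) = 1 :=
    Matrix.mem_unitaryGroup_iff.mp hM.eigenvectorUnitary.2
  have hcp : M.charpoly = (Matrix.diagonal hM.eigenvalues).charpoly := by
    conv_lhs => rw [hM.spectral_theorem]
    rw [RCLike.ofReal_real_eq_id, Function.id_comp]
    exact my_charpoly_conj _ _ _ hU
  rw [hcp, my_charpoly_diagonal, Finset.prod_eq_multiset_prod,
    show Multiset.map (fun i => X - C (hM.eigenvalues i)) Finset.univ.val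
      = Multiset.map (fun a => X - C a) (Multiset.map hM.eigenvalues Finset.univ.val) from
      by rw [Multiset.map_map]; rfl,
    Polynomial.roots_multiset_prod_X_sub_C]

/-- If symmetric A, B with A𝟏 = λ₀𝟏 = B𝟏, dim ker(A - λ₀ I) = 1, have the same
characteristic polynomial, then P₀(A,A), P₀(A,B), P₀(B,B) have the same dimension. -/
theorem finrank_P0sub_eq_of_charpoly_eq (n : ℕ) (hn : 2 ≤ n)
    (A B : Matrix (Fin n) (Fin n) ℝ) (l0 : ℝ)
    (hAsym : A.IsSymm) (hBsym : B.IsSymm)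
    (hA1 : A *ᵥ 1 = l0 • 1) (hB1 : B *ᵥ 1 = l0 • 1)
    (hmult : Module.finrank ℝ (LinearMap.ker (Matrix.toLin' (A - l0 • 1))) = 1)
    (hchar : A.charpoly = B.charpoly) :
    Module.finrank ℝ (P0sub A A) = Module.finrank ℝ (P0sub A B) ∧
    Module.finrank ℝ (P0sub A B) = Module.finrank ℝ (P0sub B B) := by
  have hAh : A.IsHermitian := by
    rw [Matrix.IsHermitian, Matrix.conjTranspose_eq_transpose_of_trivial]; exact hAsym
  have hBh : B.IsHermitian := by
    rw [Matrix.IsHermitian, Matrix.conjTranspose_eq_transpose_of_trivial]; exact hBsym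
  have hms : Finset.univ.val.map hAh.eigenvalues = Finset.univ.val.map hBh.eigenvalues := by
    rw [← charpoly_roots_eq A hAh, ← charpoly_roots_eq B hBh, hchar]
  obtain ⟨σ, hσ⟩ := exists_perm_comp _ _ hms
  set μ := hAh.eigenvalues with hμ
  set ν := hBh.eigenvalues with hν
  set P : Matrix (Fin n) (Fin n) ℝ := Matrix.of (fun i j => if i = σ j then 1 else 0) with hPdef
  have hPT : Pᵀ * P = 1 := by
    ext i j
    simp only [Matrix.mul_apply, Matrix.transpose_apply, hPdef, Matrix.of_apply, ite_mul,
      one_mul, zero_mul, Finset.sum_ite_eq, Finset.mem_univ, if_true, Matrix.one_apply]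
    by_cases h : i = j <;> simp [h, σ.injective.eq_iff]
  have hTP : P * Pᵀ = 1 := by
    ext i j
    have h1 : ∀ k, P i k * Pᵀ k j = if σ.symm i = k then (if σ.symm j = k then (1:ℝ) else 0)
        else 0 := by
      intro k
      simp only [Matrix.transpose_apply, hPdef, Matrix.of_apply, Equiv.symm_apply_eq]
      by_cases h : i = σ k <;> by_cases h' : j = σ k <;> simp [h, h']
    rw [Matrix.mul_apply, Finset.sum_congr rfl (fun k _ => h1 k), Finset.sum_ite_eq,
      Matrix.one_apply]
    simp only [Finset.mem_univ, if_true]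
    by_cases h : i = j
    · simp [h]
    · rw [if_neg h, if_neg fun hh => h (σ.symm.injective hh).symm]
  have hDiag : Pᵀ * Matrix.diagonal μ * P = Matrix.diagonal ν := by
    ext i j
    rw [mul_assoc, Matrix.mul_apply]
    have h1 : ∀ k, Pᵀ i k * (Matrix.diagonal μ * P) k j
        = if k = σ i then (if k = σ j then μ k else 0) else 0 := by
      intro k
      rw [Matrix.diagonal_mul]
      simp only [Matrix.transpose_apply, hPdef, Matrix.of_apply]
      by_cases h : k = σ i <;> by_cases h' : k = σ j <;> simp [h, h']
    rw [Finset.sum_congr rfl (fun k _ => h1 k), Finset.sum_ite_eq']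
    simp only [Finset.mem_univ, if_true, Matrix.diagonal_apply]
    by_cases h : i = j
    · simp [h, hσ]
    · rw [if_neg fun hh => h (σ.injective hh), if_neg h]
  set WA : Matrix (Fin n) (Fin n) ℝ := (hAh.eigenvectorUnitary : Matrix (Fin n) (Fin n) ℝ)
    with hWAdef
  set WB : Matrix (Fin n) (Fin n) ℝ := (hBh.eigenvectorUnitary : Matrix (Fin n) (Fin n) ℝ)
    with hWBdef
  have hWA1 : star WA * WA = 1 := (Unitary.mem_iff.mp hAh.eigenvectorUnitary.2).1
  have hWA2 : WA * star WA = 1 := (Unitary.mem_iff.mp hAh.eigenvectorUnitary.2).2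
  have hWB1 : star WB * WB = 1 := (Unitary.mem_iff.mp hBh.eigenvectorUnitary.2).1
  have hWB2 : WB * star WB = 1 := (Unitary.mem_iff.mp hBh.eigenvectorUnitary.2).2
  have hstar : ∀ M : Matrix (Fin n) (Fin n) ℝ, star M = Mᵀ := fun M =>
    (Matrix.star_eq_conjTranspose M).trans (Matrix.conjTranspose_eq_transpose_of_trivial M)
  have specA : A = WA * Matrix.diagonal μ * star WA := by
    have h := hAh.spectral_theorem
    rwa [RCLike.ofReal_real_eq_id, Function.id_comp] at h
  have specB : B = WB * Matrix.diagonal ν * star WB := by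
    have h := hBh.spectral_theorem
    rwa [RCLike.ofReal_real_eq_id, Function.id_comp] at h
  have hDP : Matrix.diagonal μ * P = P * Matrix.diagonal ν := by
    rw [← hDiag, ← mul_assoc, ← mul_assoc, hTP, one_mul]
  set Q0 : Matrix (Fin n) (Fin n) ℝ := WA * P * star WB with hQ0def
  have hAQ0 : A * Q0 = Q0 * B := by
    have lhs : A * Q0 = WA * (P * Matrix.diagonal ν) * star WB := by
      calc A * Q0 = WA * Matrix.diagonal μ * star WA * (WA * P * star WB) := by rw [← specA]
        _ = WA * Matrix.diagonal μ * (star WA * WA) * (P * star WB) := by noncomm_ring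
        _ = WA * Matrix.diagonal μ * (P * star WB) := by rw [hWA1, mul_one]
        _ = WA * (Matrix.diagonal μ * P) * star WB := by noncomm_ring
        _ = WA * (P * Matrix.diagonal ν) * star WB := by rw [hDP]
    have rhs : Q0 * B = WA * (P * Matrix.diagonal ν) * star WB := by
      calc Q0 * B = WA * P * star WB * (WB * Matrix.diagonal ν * star WB) := by rw [← specB]
        _ = WA * P * (star WB * WB) * (Matrix.diagonal ν * star WB) := by noncomm_ring
        _ = WA * P * (Matrix.diagonal ν * star WB) := by rw [hWB1, mul_one]
        _ = WA * (P * Matrix.diagonal ν) * star WB := by noncomm_ring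
    rw [lhs, rhs]
  have hQ0T : Q0ᵀ * Q0 = 1 := by
    rw [← hstar Q0]
    calc star Q0 * Q0 = WB * (star P * ((star WA * WA) * (P * star WB))) := by
          rw [hQ0def]; simp only [Matrix.star_mul, star_star]; noncomm_ring
      _ = WB * ((star P * P) * star WB) := by rw [hWA1, one_mul]; noncomm_ring
      _ = WB * star WB := by rw [hstar P, hPT, one_mul]
      _ = 1 := hWB2
  have hQ0Q : Q0 * Q0ᵀ = 1 := by
    rw [← hstar Q0]
    calc Q0 * star Q0 = WA * (P * ((star WB * WB) * (star P * star WA))) := by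
          rw [hQ0def]; simp only [Matrix.star_mul, star_star]; noncomm_ring
      _ = WA * ((P * star P) * star WA) := by rw [hWB1, one_mul]; noncomm_ring
      _ = WA * star WA := by rw [hstar P, hTP, one_mul]
      _ = 1 := hWA2
  -- the kernel argument
  have hone_ne : (1 : Fin n → ℝ) ≠ 0 := by
    intro h
    have := congrFun h ⟨0, by omega⟩
    simp at this
  have hone_mem : (1 : Fin n → ℝ) ∈ LinearMap.ker (Matrix.toLin' (A - l0 • 1)) := by
    rw [LinearMap.mem_ker, Matrix.toLin'_apply, Matrix.sub_mulVec, Matrix.smul_mulVec,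
      Matrix.one_mulVec, hA1, sub_self]
  have hker : LinearMap.ker (Matrix.toLin' (A - l0 • 1)) = Submodule.span ℝ {(1 : Fin n → ℝ)} := by
    refine (Submodule.eq_of_le_of_finrank_le ?_ ?_).symm
    · rw [Submodule.span_le, Set.singleton_subset_iff]; exact hone_mem
    · rw [hmult, finrank_span_singleton hone_ne]
  have hQ0mem : Q0 *ᵥ 1 ∈ LinearMap.ker (Matrix.toLin' (A - l0 • 1)) := by
    rw [LinearMap.mem_ker, Matrix.toLin'_apply, Matrix.sub_mulVec, Matrix.smul_mulVec,
      Matrix.one_mulVec, Matrix.mulVec_mulVec, hAQ0, ← Matrix.mulVec_mulVec, hB1,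
      Matrix.mulVec_smul, sub_self]
  obtain ⟨c, hc⟩ : ∃ c : ℝ, Q0 *ᵥ 1 = c • 1 := by
    rw [hker] at hQ0mem
    obtain ⟨c, hc⟩ := Submodule.mem_span_singleton.mp hQ0mem
    exact ⟨c, hc.symm⟩
  have hQ0T1 : Q0ᵀ *ᵥ (Q0 *ᵥ 1) = 1 := by
    rw [Matrix.mulVec_mulVec, hQ0T, Matrix.one_mulVec]
  have hn1 : ((1 : Fin n → ℝ) ⬝ᵥ (1 : Fin n → ℝ)) = (n : ℝ) := by
    simp [dotProduct]
  have hcc : c * c = 1 := by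
    have hd : (Q0 *ᵥ 1) ⬝ᵥ (Q0 *ᵥ 1) = (1 : Fin n → ℝ) ⬝ᵥ (1 : Fin n → ℝ) := by
      rw [Matrix.dotProduct_mulVec, ← Matrix.mulVec_transpose, hQ0T1]
    rw [hc, smul_dotProduct, dotProduct_smul, smul_eq_mul, smul_eq_mul,
      ← mul_assoc, hn1] at hd
    have hnne : (n : ℝ) ≠ 0 := by
      have : 0 < n := by omega
      exact_mod_cast this.ne'
    exact mul_right_cancel₀ hnne (by rw [hd, one_mul])
  have hQ0t1 : Q0ᵀ *ᵥ 1 = c • 1 := by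
    have h1 : c • (Q0ᵀ *ᵥ 1) = 1 := by
      rw [← Matrix.mulVec_smul, ← hc, hQ0T1]
    calc Q0ᵀ *ᵥ 1 = (c * c) • (Q0ᵀ *ᵥ 1) := by rw [hcc, one_smul]
      _ = c • (c • (Q0ᵀ *ᵥ 1)) := by rw [smul_smul]
      _ = c • 1 := by rw [h1]
  set Q : Matrix (Fin n) (Fin n) ℝ := c • Q0 with hQdef
  have hQT : Qᵀ * Q = 1 := by
    rw [hQdef, Matrix.transpose_smul, Matrix.smul_mul, Matrix.mul_smul, smul_smul, hcc,
      one_smul, hQ0T]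
  have hQQ : Q * Qᵀ = 1 := by
    rw [hQdef, Matrix.transpose_smul, Matrix.smul_mul, Matrix.mul_smul, smul_smul, hcc,
      one_smul, hQ0Q]
  have hAQ : A * Q = Q * B := by
    rw [hQdef, Matrix.mul_smul, Matrix.smul_mul, hAQ0]
  have hQ1 : Q *ᵥ 1 = 1 := by
    rw [hQdef, Matrix.smul_mulVec, hc, smul_smul, hcc, one_smul]
  have hQt1 : Qᵀ *ᵥ 1 = 1 := by
    rw [hQdef, Matrix.transpose_smul, Matrix.smul_mulVec, hQ0t1, smul_smul, hcc, one_smul]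
  exact ⟨finrank_P0_left A B Q hQT hQQ hAQ hQ1 hQt1,
    finrank_P0_right A B Q hQT hQQ hAQ hQ1 hQt1⟩
end

section
/- Let n ≥ 2, N ∈ ℕ, and let A, B be symmetric n×n matrices with nonnegative integer entries whose row sums all equal N (the representation matrices of two regular undirected multigraphs on n vertices of common degree N). Suppose the linear spans of P(A,A), P(A,B), P(B,B) all have the same dimension Δ, and suppose there exists a strictly increasing sequence (t_i) of reals in (0, √(n−1)) converging to √(n−1) such that for every i the Δ-dimensional Hausdorff measures (with respect to the Frobenius-norm metric) of B(0,t_i) ∩ P(A,A), B(0,t_i) ∩ P(A,B), and B(0,t_i) ∩ P(B,B) are all equal. Then A and B are permutationally similar, i.e., there exists a permutation matrix P with B = P A Pᵀ. -/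
open Matrix MeasureTheory ENNReal

open Bornology in
lemma haus_transfer {E : Type*} [NormedAddCommGroup E] [NormedSpace ℝ E] [FiniteDimensional ℝ E]
    [MeasurableSpace E] [BorelSpace E] (V : Submodule ℝ E) :
    (∀ S : Set E, S ⊆ (V : Set E) → IsBounded S → μH[(Module.finrank ℝ V : ℝ)] S < ⊤) ∧
    (∀ U : Set E, IsOpen U → (U ∩ (V : Set E)).Nonempty →
       0 < μH[(Module.finrank ℝ V : ℝ)] (U ∩ (V : Set E))) := by
  classical
  set Δ := Module.finrank ℝ V with hΔ
  have hd0 : (0:ℝ) ≤ (Δ : ℝ) := Nat.cast_nonneg _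
  let b : Module.Basis (Fin Δ) ℝ V := Module.finBasis ℝ V
  let L : (Fin Δ → ℝ) →ₗ[ℝ] E := V.subtype ∘ₗ (b.equivFun.symm : (Fin Δ → ℝ) ≃ₗ[ℝ] V).toLinearMap
  have hLinj : Function.Injective L := by
    intro x y h
    exact b.equivFun.symm.injective (Subtype.coe_injective h)
  have hrange : Set.range L = (V : Set E) := by
    ext x
    constructor
    · rintro ⟨c, rfl⟩; exact (b.equivFun.symm c).2
    · intro hx
      refine ⟨b.equivFun ⟨x, hx⟩, ?_⟩
      have : L (b.equivFun ⟨x, hx⟩) = ((b.equivFun.symm (b.equivFun ⟨x, hx⟩) : V) : E) := rfl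
      rw [this, b.equivFun.symm_apply_apply]
  have hcont : Continuous L := L.continuous_of_finiteDimensional
  obtain ⟨C, hC⟩ : ∃ C : NNReal, LipschitzWith C L := by
    refine ⟨‖LinearMap.toContinuousLinearMap L‖₊, ?_⟩
    have := (LinearMap.toContinuousLinearMap L).lipschitz
    simpa using this
  obtain ⟨K, -, hK⟩ := L.exists_antilipschitzWith (LinearMap.ker_eq_bot.mpr hLinj)
  have hpi : (μH[(Δ : ℝ)] : Measure (Fin Δ → ℝ)) = volume := by
    have := hausdorffMeasure_pi_real (ι := Fin Δ)
    simpa using this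
  constructor
  · intro S hSV hSb
    have hT : L '' (L ⁻¹' S) = S := Set.image_preimage_eq_of_subset (by rw [hrange]; exact hSV)
    calc μH[(Δ:ℝ)] S = μH[(Δ:ℝ)] (L '' (L ⁻¹' S)) := by rw [hT]
      _ ≤ (C : ℝ≥0∞) ^ (Δ:ℝ) * μH[(Δ:ℝ)] (L ⁻¹' S) := hC.hausdorffMeasure_image_le hd0 _
      _ < ⊤ := by
          apply ENNReal.mul_lt_top
          · exact (ENNReal.rpow_lt_top_of_nonneg hd0 ENNReal.coe_ne_top)
          · rw [hpi]
            obtain ⟨r, hr⟩ := (hK.isBounded_preimage hSb).subset_closedBall 0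
            exact lt_of_le_of_lt (measure_mono hr) measure_closedBall_lt_top
  · intro U hU hne
    have hsub : U ∩ (V : Set E) ⊆ Set.range L := by rw [hrange]; exact Set.inter_subset_right
    have hT : L '' (L ⁻¹' (U ∩ V)) = U ∩ V := Set.image_preimage_eq_of_subset hsub
    have hTopen : IsOpen (L ⁻¹' (U ∩ V)) := by
      have : L ⁻¹' (U ∩ (V:Set E)) = L ⁻¹' U := by
        ext c; simp only [Set.mem_preimage, Set.mem_inter_iff]
        exact ⟨fun h => h.1, fun h => ⟨h, by rw [← hrange]; exact Set.mem_range_self c⟩⟩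
      rw [this]; exact hU.preimage hcont
    have hTne : (L ⁻¹' (U ∩ (V:Set E))).Nonempty := by
      obtain ⟨x, hx⟩ := hne
      obtain ⟨c, rfl⟩ := hsub hx
      exact ⟨c, hx⟩
    have hpos : 0 < μH[(Δ:ℝ)] (L ⁻¹' (U ∩ (V:Set E))) := by
      rw [hpi]; exact hTopen.measure_pos volume hTne
    have hle : μH[(Δ:ℝ)] (L ⁻¹' (U ∩ (V:Set E))) ≤ (K : ℝ≥0∞) ^ (Δ:ℝ) * μH[(Δ:ℝ)] (U ∩ (V:Set E)) := by
      have := hK.le_hausdorffMeasure_image hd0 (L ⁻¹' (U ∩ (V:Set E)))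
      rwa [hT] at this
    by_contra h
    push_neg at h
    have h0 : μH[(Δ:ℝ)] (U ∩ (V:Set E)) = 0 := le_antisymm h (zero_le)
    rw [h0, mul_zero] at hle
    exact absurd (le_antisymm hle (zero_le)) (ne_of_gt hpos)

lemma coe_affineSpan_eq_span {E : Type*} [NormedAddCommGroup E] [NormedSpace ℝ E]
    {s : Set E} (h0 : (0:E) ∈ s) :
    (affineSpan ℝ s : Set E) = (Submodule.span ℝ s : Set E) := by
  apply Set.Subset.antisymm
  · intro y hy
    have h1 : y -ᵥ (0:E) ∈ (affineSpan ℝ s).direction :=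
      AffineSubspace.vsub_mem_direction hy (mem_affineSpan ℝ h0)
    rw [direction_affineSpan] at h1
    have h2 : vectorSpan ℝ s ≤ Submodule.span ℝ s := by
      rw [vectorSpan_def]
      apply Submodule.span_le.mpr
      rintro v ⟨a, ha, b, hb, rfl⟩
      exact sub_mem (Submodule.subset_span ha) (Submodule.subset_span hb)
    simpa using h2 h1
  · intro y hy
    have h2 : Submodule.span ℝ s ≤ vectorSpan ℝ s := by
      apply Submodule.span_le.mpr
      intro a ha
      have := vsub_mem_vectorSpan ℝ ha h0
      simpa using this
    have h3 : y ∈ (affineSpan ℝ s).direction := by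
      rw [direction_affineSpan]; exact h2 hy
    have := AffineSubspace.vadd_mem_of_mem_direction h3 (mem_affineSpan ℝ h0)
    simpa using this

lemma exists_relative_interior_pt {E : Type*} [NormedAddCommGroup E] [NormedSpace ℝ E]
    [FiniteDimensional ℝ E] {s : Set E} (hconv : Convex ℝ s) (h0 : (0:E) ∈ s) :
    ∃ w ∈ s, ∃ ε > 0, ∀ y ∈ (Submodule.span ℝ s : Set E), dist y w < ε → y ∈ s := by
  obtain ⟨w, hw⟩ := Set.Nonempty.intrinsicInterior hconv ⟨0, h0⟩
  have hws : w ∈ s := intrinsicInterior_subset hw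
  obtain ⟨x, hx, rfl⟩ := hw
  have hx' := mem_interior_iff_mem_nhds.mp hx
  rw [Metric.mem_nhds_iff] at hx'
  obtain ⟨ε, hε, hball⟩ := hx'
  refine ⟨x, hws, ε, hε, ?_⟩
  intro y hy hdist
  rw [← coe_affineSpan_eq_span h0] at hy
  have : (⟨y, hy⟩ : affineSpan ℝ s) ∈ Metric.ball x ε := by
    rw [Metric.mem_ball, Subtype.dist_eq]
    exact hdist
  exact hball this

lemma mem_Pset_iff {n : ℕ} {S T X : Matrix (Fin n) (Fin n) ℝ} :
    X ∈ Pset S T ↔ (∀ i, ∑ j, X i j = 0) ∧ (∀ j, ∑ i, X i j = 0) ∧ S * X - X * T = 0 ∧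
      (∀ i j, -(1/n : ℝ) ≤ X i j) := by
  unfold Pset P0
  simp only [Set.mem_setOf_eq, funext_iff, Matrix.mulVec, dotProduct, Pi.one_apply,
    mul_one, Pi.zero_apply, Matrix.transpose_apply]
  tauto

lemma zero_mem_Pset {n : ℕ} (S T : Matrix (Fin n) (Fin n) ℝ) :
    (0 : Matrix (Fin n) (Fin n) ℝ) ∈ Pset S T := by
  rw [mem_Pset_iff]
  refine ⟨by simp, by simp, by simp, fun i j => by simp [one_div]⟩

lemma Pset_convex {n : ℕ} (S T : Matrix (Fin n) (Fin n) ℝ) : Convex ℝ (Pset S T) := by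
  intro X hX Y hY a b ha hb hab
  rw [mem_Pset_iff] at hX hY ⊢
  obtain ⟨h1, h2, h3, h4⟩ := hX
  obtain ⟨g1, g2, g3, g4⟩ := hY
  refine ⟨fun i => ?_, fun j => ?_, ?_, fun i j => ?_⟩
  · simp [Matrix.add_apply, Matrix.smul_apply, Finset.sum_add_distrib, ← Finset.mul_sum, h1, g1,
      smul_eq_mul]
  · simp [Matrix.add_apply, Matrix.smul_apply, Finset.sum_add_distrib, ← Finset.mul_sum, h2, g2,
      smul_eq_mul]
  · have : S * (a • X + b • Y) - (a • X + b • Y) * T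
        = a • (S * X - X * T) + b • (S * Y - Y * T) := by
      rw [Matrix.mul_add, Matrix.add_mul, Matrix.mul_smul, Matrix.mul_smul, Matrix.smul_mul,
        Matrix.smul_mul, smul_sub, smul_sub]
      abel
    rw [this, h3, g3, smul_zero, smul_zero, add_zero]
  · have hX' := h4 i j
    have hY' := g4 i j
    have : a * (-(1/n : ℝ)) + b * (-(1/n)) ≤ a * X i j + b * Y i j :=
      add_le_add (mul_le_mul_of_nonneg_left hX' ha) (mul_le_mul_of_nonneg_left hY' hb)
    calc -(1/n : ℝ) = (a + b) * (-(1/n)) := by rw [hab, one_mul]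
      _ ≤ a * X i j + b * Y i j := by nlinarith
      _ = (a • X + b • Y) i j := by simp [smul_eq_mul]

lemma Pset_entry_le {n : ℕ} {S T X : Matrix (Fin n) (Fin n) ℝ} (hX : X ∈ Pset S T) :
    ∀ i j, X i j ≤ ((n:ℝ) - 1)/n := by
  intro i j
  rw [mem_Pset_iff] at hX
  have hrow := hX.1 i
  have h1 : X i j = - ∑ k ∈ Finset.univ.erase j, X i k := by
    rw [← Finset.add_sum_erase _ _ (Finset.mem_univ j)] at hrow
    linarith
  have h2 : - ∑ k ∈ Finset.univ.erase j, X i k ≤ ∑ k ∈ Finset.univ.erase j, (1/n : ℝ) := by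
    rw [neg_le, ← Finset.sum_neg_distrib]
    apply Finset.sum_le_sum
    intro k _
    have := hX.2.2.2 i k
    linarith
  rw [h1]
  calc - ∑ k ∈ Finset.univ.erase j, X i k ≤ ∑ k ∈ Finset.univ.erase j, (1/n : ℝ) := h2
    _ = ((n:ℝ) - 1)/n := by
        rw [Finset.sum_const, Finset.card_erase_of_mem (Finset.mem_univ j), Finset.card_univ,
          Fintype.card_fin, nsmul_eq_mul, Nat.cast_sub (by
            rcases Nat.eq_zero_or_pos n with h | h
            · exact absurd j.2 (by omega)
            · omega)]
        ring

lemma Pset_sq_expand {n : ℕ} (hn : 1 ≤ n) {S T X : Matrix (Fin n) (Fin n) ℝ} (hX : X ∈ Pset S T) :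
    ∑ i, ∑ j, (X i j + 1/n)^2 = (∑ i, ∑ j, (X i j)^2) + 1 := by
  rw [mem_Pset_iff] at hX
  have hx0 : ∑ i, ∑ j, X i j = 0 := by
    rw [Finset.sum_eq_zero]
    intro i _
    exact hX.1 i
  have expand : ∀ i j : Fin n, (X i j + 1/n)^2 = (X i j)^2 + (2/n) * X i j + 1/(n:ℝ)^2 := by
    intro i j; field_simp; ring
  have hcast : ((n:ℝ)) ≠ 0 := Nat.cast_ne_zero.mpr (by omega)
  calc ∑ i, ∑ j, (X i j + 1/n)^2
      = ∑ i, ∑ j, ((X i j)^2 + (2/n) * X i j + 1/(n:ℝ)^2) := by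
        apply Finset.sum_congr rfl; intro i _; apply Finset.sum_congr rfl; intro j _
        exact expand i j
    _ = (∑ i, ∑ j, (X i j)^2) + (2/n) * (∑ i, ∑ j, X i j) + (n:ℝ) * (n * (1/(n:ℝ)^2)) := by
        simp [Finset.sum_add_distrib, Finset.mul_sum, Finset.sum_const, Finset.card_univ]
    _ = (∑ i, ∑ j, (X i j)^2) + 1 := by
        rw [hx0]
        field_simp
        ring

lemma Pset_y_sum {n : ℕ} {S T X : Matrix (Fin n) (Fin n) ℝ} (hX : X ∈ Pset S T) :
    ∑ i, ∑ j, (X i j + 1/n) = (n:ℝ) := by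
  rw [mem_Pset_iff] at hX
  have : ∀ i : Fin n, ∑ j, (X i j + 1/(n:ℝ)) = 1 := by
    intro i
    rw [Finset.sum_add_distrib, hX.1 i, Finset.sum_const, Finset.card_univ, Fintype.card_fin,
      zero_add, nsmul_eq_mul]
    rcases Nat.eq_zero_or_pos n with h | h
    · exact absurd i.2 (by omega)
    · field_simp
  rw [Finset.sum_congr rfl (fun i _ => this i), Finset.sum_const, Finset.card_univ,
    Fintype.card_fin, nsmul_eq_mul, mul_one]

lemma Pset_sq_sum_le {n : ℕ} (hn : 1 ≤ n) {S T X : Matrix (Fin n) (Fin n) ℝ} (hX : X ∈ Pset S T) :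
    ∑ i, ∑ j, (X i j)^2 ≤ (n:ℝ) - 1 := by
  have h1 := Pset_sq_expand hn hX
  have h2 := Pset_y_sum hX
  have h3 : ∑ i, ∑ j, (X i j + 1/(n:ℝ))^2 ≤ ∑ i, ∑ j, (X i j + 1/n) := by
    apply Finset.sum_le_sum; intro i _; apply Finset.sum_le_sum; intro j _
    have hlo : 0 ≤ X i j + 1/(n:ℝ) := by
      have := (mem_Pset_iff.mp hX).2.2.2 i j; linarith
    have hhi : X i j + 1/(n:ℝ) ≤ 1 := by
      have := Pset_entry_le hX i j
      have hcast : ((n:ℝ)) ≠ 0 := Nat.cast_ne_zero.mpr (by omega)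
      have h1n : (1:ℝ) ≤ n := by exact_mod_cast hn
      have : X i j + 1/(n:ℝ) ≤ ((n:ℝ)-1)/n + 1/n := by linarith
      rw [← add_div, sub_add_cancel, div_self hcast] at this
      exact this
    nlinarith
  linarith

lemma Pset_perm_of_eq {n : ℕ} (hn : 1 ≤ n) {S T X : Matrix (Fin n) (Fin n) ℝ} (hX : X ∈ Pset S T)
    (heq : ∑ i, ∑ j, (X i j)^2 = (n:ℝ) - 1) : IsPermMatrix (X + Jmat n) := by
  have hP : ∀ i j, (X + Jmat n) i j = X i j + 1/n := fun i j => rfl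
  have h01 : ∀ i j, X i j + 1/(n:ℝ) = 0 ∨ X i j + 1/(n:ℝ) = 1 := by
    have h1 := Pset_sq_expand hn hX
    have h2 := Pset_y_sum hX
    have hzero : ∑ i, ∑ j, ((X i j + 1/(n:ℝ)) - (X i j + 1/n)^2) = 0 := by
      rw [Finset.sum_congr rfl (fun i (_ : i ∈ Finset.univ) => Finset.sum_sub_distrib _ _)]
      rw [Finset.sum_sub_distrib, h1, h2, heq]
      ring
    have hnn : ∀ i j : Fin n, 0 ≤ (X i j + 1/(n:ℝ)) - (X i j + 1/n)^2 := by
      intro i j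
      have hlo : 0 ≤ X i j + 1/(n:ℝ) := by
        have := (mem_Pset_iff.mp hX).2.2.2 i j; linarith
      have hhi : X i j + 1/(n:ℝ) ≤ 1 := by
        have := Pset_entry_le hX i j
        have hcast : ((n:ℝ)) ≠ 0 := Nat.cast_ne_zero.mpr (by omega)
        have : X i j + 1/(n:ℝ) ≤ ((n:ℝ)-1)/n + 1/n := by linarith
        rw [← add_div, sub_add_cancel, div_self hcast] at this
        exact this
      nlinarith
    have hall : ∀ i ∈ Finset.univ, ∀ j ∈ Finset.univ,
        (X i j + 1/(n:ℝ)) - (X i j + 1/n)^2 = 0 := by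
      have houter := (Finset.sum_eq_zero_iff_of_nonneg (fun i _ =>
        Finset.sum_nonneg (fun j _ => hnn i j))).mp hzero
      intro i hi j hj
      exact (Finset.sum_eq_zero_iff_of_nonneg (fun j _ => hnn i j)).mp (houter i hi) j hj
    intro i j
    have := hall i (Finset.mem_univ i) j (Finset.mem_univ j)
    have hfac : (X i j + 1/(n:ℝ)) * (1 - (X i j + 1/n)) = 0 := by nlinarith
    rcases mul_eq_zero.mp hfac with h | h
    · left; exact h
    · right; linarith
  have hrowsum : ∀ i, ∑ j, (X i j + 1/(n:ℝ)) = 1 := by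
    intro i
    rw [Finset.sum_add_distrib, (mem_Pset_iff.mp hX).1 i, Finset.sum_const, Finset.card_univ,
      Fintype.card_fin, zero_add, nsmul_eq_mul]
    have hcast : ((n:ℝ)) ≠ 0 := Nat.cast_ne_zero.mpr (by omega)
    field_simp
  have hcolsum : ∀ j, ∑ i, (X i j + 1/(n:ℝ)) = 1 := by
    intro j
    rw [Finset.sum_add_distrib, (mem_Pset_iff.mp hX).2.1 j, Finset.sum_const, Finset.card_univ,
      Fintype.card_fin, zero_add, nsmul_eq_mul]
    have hcast : ((n:ℝ)) ≠ 0 := Nat.cast_ne_zero.mpr (by omega)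
    field_simp
  have key : ∀ (f : Fin n → ℝ), (∀ j, f j = 0 ∨ f j = 1) → (∑ j, f j = 1) → ∃! j, f j = 1 := by
    intro f h01f hsum
    have hex : ∃ j, f j = 1 := by
      by_contra hno
      push_neg at hno
      have : ∀ j, f j = 0 := fun j => (h01f j).resolve_right (hno j)
      rw [Finset.sum_congr rfl (fun j _ => this j), Finset.sum_const_zero] at hsum
      norm_num at hsum
    obtain ⟨j0, hj0⟩ := hex
    refine ⟨j0, hj0, ?_⟩
    intro j1 hj1
    by_contra hne
    have h2 : f j1 + f j0 ≤ ∑ j, f j := by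
      apply Finset.add_le_sum (fun k _ => ?_) (Finset.mem_univ j1) (Finset.mem_univ j0) hne
      rcases h01f k with h | h <;> rw [h] <;> norm_num
    rw [hj0, hj1, hsum] at h2
    norm_num at h2
  refine ⟨fun i j => by rw [hP]; exact h01 i j, fun i => ?_, fun j => ?_⟩
  · have := key (fun j => X i j + 1/(n:ℝ)) (h01 i) (hrowsum i)
    simpa [hP] using this
  · have := key (fun i => X i j + 1/(n:ℝ)) (fun i => h01 i j) (hcolsum j)
    simpa [hP] using this

lemma perm_transpose {n : ℕ} {P : Matrix (Fin n) (Fin n) ℝ} (h : IsPermMatrix P) :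
    IsPermMatrix Pᵀ :=
  ⟨fun i j => h.1 j i, fun i => h.2.2 i, fun j => h.2.1 j⟩

lemma perm_transpose_mul {n : ℕ} {P : Matrix (Fin n) (Fin n) ℝ} (h : IsPermMatrix P) :
    Pᵀ * P = 1 := by
  ext j k
  rw [Matrix.mul_apply]
  obtain ⟨i0, hi0, hi0u⟩ := h.2.2 j
  rw [Finset.sum_eq_single_of_mem i0 (Finset.mem_univ i0)]
  · rw [Matrix.transpose_apply, hi0, one_mul]
    rcases eq_or_ne j k with rfl | hne
    · rw [hi0, Matrix.one_apply_eq]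
    · rw [Matrix.one_apply_ne hne]
      obtain ⟨j', hj', hj'u⟩ := h.2.1 i0
      rcases h.1 i0 k with h0 | h1
      · exact h0
      · exfalso
        have e1 := hj'u k h1
        have e2 := hj'u j hi0
        exact hne (e2.trans e1.symm)
  · intro i _ hne
    rw [Matrix.transpose_apply]
    rcases h.1 i j with h0 | h1
    · rw [h0, zero_mul]
    · exact absurd (hi0u i h1) hne

lemma mul_J_eq_J_mul {n : ℕ} {N : ℕ} {A B : Matrix (Fin n) (Fin n) ℝ}
    (hBsym : B.IsSymm) (hArow : ∀ i, ∑ j, A i j = (N:ℝ)) (hBrow : ∀ i, ∑ j, B i j = (N:ℝ)) :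
    A * Jmat n = Jmat n * B := by
  ext i k
  rw [Matrix.mul_apply, Matrix.mul_apply]
  have hL : ∑ j, A i j * Jmat n j k = (N:ℝ) * (1/n) := by
    simp only [Jmat, Matrix.of_apply, ← Finset.sum_mul, hArow i]
  have hcol : ∑ j, B j k = (N:ℝ) := by
    have hsymm : ∀ j, B j k = B k j := by
      intro j
      have := congrFun (congrFun hBsym k) j
      rw [Matrix.transpose_apply] at this
      exact this
    rw [Finset.sum_congr rfl (fun j _ => hsymm j)]
    exact hBrow k
  have hR : ∑ j, Jmat n i j * B j k = (1/(n:ℝ)) * (N:ℝ) := by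
    simp only [Jmat, Matrix.of_apply, ← Finset.mul_sum, hcol]
  rw [hL, hR]
  ring

lemma one_sub_J_mem {n : ℕ} (hn : 1 ≤ n) {N : ℕ} {A : Matrix (Fin n) (Fin n) ℝ}
    (hAsym : A.IsSymm) (hArow : ∀ i, ∑ j, A i j = (N:ℝ)) : (1 - Jmat n) ∈ Pset A A := by
  have hcast : ((n:ℝ)) ≠ 0 := Nat.cast_ne_zero.mpr (by omega)
  rw [mem_Pset_iff]
  refine ⟨fun i => ?_, fun j => ?_, ?_, fun i j => ?_⟩
  · simp only [Matrix.sub_apply, Finset.sum_sub_distrib, Matrix.one_apply, Jmat,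
      Matrix.of_apply, Finset.sum_const, Finset.card_univ, Finset.sum_ite_eq,
      Finset.mem_univ, if_true, Fintype.card_fin, nsmul_eq_mul]
    field_simp
    ring
  · simp only [Matrix.sub_apply, Finset.sum_sub_distrib, Matrix.one_apply, Jmat,
      Matrix.of_apply, Finset.sum_const, Finset.card_univ, Finset.sum_ite_eq',
      Finset.mem_univ, if_true, Fintype.card_fin, nsmul_eq_mul]
    field_simp
    ring
  · rw [Matrix.mul_sub, Matrix.sub_mul, Matrix.mul_one, Matrix.one_mul,
      mul_J_eq_J_mul hAsym hArow hArow]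
    abel
  · rcases eq_or_ne i j with rfl | hne
    · simp only [Matrix.sub_apply, Matrix.one_apply_eq, Jmat, Matrix.of_apply]
      have h1 : 1/(n:ℝ) ≤ 1 := by
        rw [div_le_one (by positivity)]
        exact_mod_cast hn
      linarith
    · simp only [Matrix.sub_apply, Matrix.one_apply_ne hne, Jmat, Matrix.of_apply]
      linarith [le_refl (-(1/(n:ℝ)))]

lemma one_sub_J_sq {n : ℕ} (hn : 1 ≤ n) :
    ∑ i, ∑ j, ((1 - Jmat n : Matrix (Fin n) (Fin n) ℝ) i j)^2 = (n:ℝ) - 1 := by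
  have hcast : ((n:ℝ)) ≠ 0 := Nat.cast_ne_zero.mpr (by omega)
  have hinner : ∀ i : Fin n, ∑ j, ((1 - Jmat n : Matrix (Fin n) (Fin n) ℝ) i j)^2
      = (1 - 1/(n:ℝ))^2 + ((n:ℝ)-1) * (1/n)^2 := by
    intro i
    rw [← Finset.add_sum_erase _ _ (Finset.mem_univ i)]
    have hdiag : ((1 - Jmat n : Matrix (Fin n) (Fin n) ℝ) i i)^2 = (1 - 1/(n:ℝ))^2 := by
      simp [Matrix.sub_apply, Matrix.one_apply_eq, Jmat]
    have hoff : ∀ j ∈ Finset.univ.erase i, ((1 - Jmat n : Matrix (Fin n) (Fin n) ℝ) i j)^2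
        = (1/(n:ℝ))^2 := by
      intro j hj
      have hne : i ≠ j := fun h => (Finset.mem_erase.mp hj).1 h.symm
      simp [Matrix.sub_apply, Matrix.one_apply_ne hne, Jmat]
    rw [hdiag, Finset.sum_congr rfl hoff, Finset.sum_const,
      Finset.card_erase_of_mem (Finset.mem_univ i), Finset.card_univ, Fintype.card_fin,
      nsmul_eq_mul, Nat.cast_sub hn]
    norm_num
  rw [Finset.sum_congr rfl (fun i _ => hinner i), Finset.sum_const, Finset.card_univ,
    Fintype.card_fin, nsmul_eq_mul]
  field_simp
  ring

lemma frob_eq_sqrt_sum {n : ℕ} (X : Matrix (Fin n) (Fin n) ℝ) :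
    frob X = Real.sqrt (∑ i, ∑ j, (X i j)^2) := by
  unfold frob
  congr 1
  simp [Matrix.trace, Matrix.diag, Matrix.mul_apply, pow_two]

lemma Pset_isClosed {n : ℕ} (S T : Matrix (Fin n) (Fin n) ℝ) : IsClosed (Pset S T) := by
  have hrw : Pset S T = (⋂ i, {X : Matrix (Fin n) (Fin n) ℝ | ∑ j, X i j = 0}) ∩
      ((⋂ j, {X : Matrix (Fin n) (Fin n) ℝ | ∑ i, X i j = 0}) ∩
      ({X : Matrix (Fin n) (Fin n) ℝ | S * X - X * T = 0} ∩
      (⋂ i, ⋂ j, {X : Matrix (Fin n) (Fin n) ℝ | -(1/n:ℝ) ≤ X i j}))) := by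
    ext X
    simp only [mem_Pset_iff, Set.mem_inter_iff, Set.mem_iInter, Set.mem_setOf_eq]
  rw [hrw]
  have hcont : ∀ i j : Fin n, Continuous fun X : Matrix (Fin n) (Fin n) ℝ => X i j :=
    fun i j => continuous_id.matrix_elem i j
  refine IsClosed.inter (isClosed_iInter fun i =>
      isClosed_eq (continuous_finset_sum _ fun j _ => hcont i j) continuous_const)
    (IsClosed.inter (isClosed_iInter fun j =>
      isClosed_eq (continuous_finset_sum _ fun i _ => hcont i j) continuous_const)
    (IsClosed.inter ?_ ?_))
  · exact isClosed_eq ((continuous_const.matrix_mul continuous_id).sub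
      (continuous_id.matrix_mul continuous_const)) continuous_const
  · exact isClosed_iInter fun i => isClosed_iInter fun j =>
      isClosed_le continuous_const (hcont i j)

lemma Pset_isCompact {n : ℕ} (S T : Matrix (Fin n) (Fin n) ℝ) : IsCompact (Pset S T) := by
  have hpi : IsCompact ((Set.univ.pi fun _ : Fin n => Set.univ.pi fun _ : Fin n =>
      Set.Icc (-(1/n:ℝ)) (((n:ℝ)-1)/n)) : Set (Matrix (Fin n) (Fin n) ℝ)) :=
    isCompact_univ_pi fun _ => isCompact_univ_pi fun _ => isCompact_Icc
  apply hpi.of_isClosed_subset (Pset_isClosed S T)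
  intro X hX
  refine Set.mem_univ_pi.mpr fun i => Set.mem_univ_pi.mpr fun j => ?_
  exact ⟨hX.2 i j, Pset_entry_le hX i j⟩

/-- `matEuclid` as a linear equivalence. -/
noncomputable def matLE (n : ℕ) :
    Matrix (Fin n) (Fin n) ℝ ≃ₗ[ℝ] EuclideanSpace ℝ (Fin n × Fin n) where
  toFun := matEuclid n
  invFun := fun y => Matrix.of fun i j => y (i, j)
  map_add' _ _ := rfl
  map_smul' _ _ := rfl
  left_inv _ := rfl
  right_inv _ := rfl

lemma norm_matEuclid {n : ℕ} (X : Matrix (Fin n) (Fin n) ℝ) : ‖matEuclid n X‖ = frob X := by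
  rw [EuclideanSpace.norm_eq, frob_eq_sqrt_sum]
  congr 1
  rw [Fintype.sum_prod_type]
  apply Finset.sum_congr rfl; intro a _
  apply Finset.sum_congr rfl; intro b _
  have : matEuclid n X (a, b) = X a b := rfl
  rw [this, Real.norm_eq_abs, sq_abs]

lemma image_frob_ball {n : ℕ} (S T : Matrix (Fin n) (Fin n) ℝ) (c : ℝ) :
    matEuclid n '' ({X | frob X ≤ c} ∩ Pset S T)
      = Metric.closedBall 0 c ∩ matEuclid n '' Pset S T := by
  have h1 : matEuclid n '' ({X | frob X ≤ c} ∩ Pset S T)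
      = (matEuclid n '' {X | frob X ≤ c}) ∩ (matEuclid n '' Pset S T) :=
    Set.image_inter (matLE n).injective
  rw [h1]
  congr 1
  ext y
  constructor
  · rintro ⟨X, hX, rfl⟩
    rw [Metric.mem_closedBall, dist_zero_right, norm_matEuclid]
    exact hX
  · intro hy
    refine ⟨(matLE n).symm y, ?_, (matLE n).apply_symm_apply y⟩
    rw [Set.mem_setOf_eq, ← norm_matEuclid]
    rw [show matEuclid n ((matLE n).symm y) = y from (matLE n).apply_symm_apply y]
    rwa [Metric.mem_closedBall, dist_zero_right] at hy

set_option maxHeartbeats 1000000 in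
/-- If A, B are symmetric matrices with nonnegative integer entries and all row sums
equal to N, the linear spans of P(A,A), P(A,B), P(B,B) all have dimension Δ, and there
is a strictly increasing sequence t_i in (0, √(n-1)) converging to √(n-1) along which
the Δ-dimensional Hausdorff measures (Frobenius metric) of B(0,t_i) ∩ P(A,A),
B(0,t_i) ∩ P(A,B), B(0,t_i) ∩ P(B,B) coincide, then A and B are permutationally similar. -/
theorem permSimilar_of_hausdorff_measures_eq_on_seq (n : ℕ) (hn : 2 ≤ n) (N : ℕ)
    (A B : Matrix (Fin n) (Fin n) ℝ)
    (hAsym : A.IsSymm) (hBsym : B.IsSymm)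
    (hAnat : ∀ i j, ∃ k : ℕ, A i j = (k : ℝ))
    (hBnat : ∀ i j, ∃ k : ℕ, B i j = (k : ℝ))
    (hArow : ∀ i, ∑ j, A i j = (N : ℝ)) (hBrow : ∀ i, ∑ j, B i j = (N : ℝ))
    (Δ : ℕ)
    (hΔAA : Module.finrank ℝ (Submodule.span ℝ (Pset A A)) = Δ)
    (hΔAB : Module.finrank ℝ (Submodule.span ℝ (Pset A B)) = Δ)
    (hΔBB : Module.finrank ℝ (Submodule.span ℝ (Pset B B)) = Δ)
    (t : ℕ → ℝ) (hmono : StrictMono t)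
    (hrange : ∀ i, t i ∈ Set.Ioo (0 : ℝ) (Real.sqrt ((n : ℝ) - 1)))
    (hlim : Filter.Tendsto t Filter.atTop (nhds (Real.sqrt ((n : ℝ) - 1))))
    (hvol : ∀ i,
      μH[(Δ : ℝ)] (matEuclid n '' ({X | frob X ≤ t i} ∩ Pset A A)) =
        μH[(Δ : ℝ)] (matEuclid n '' ({X | frob X ≤ t i} ∩ Pset A B)) ∧
      μH[(Δ : ℝ)] (matEuclid n '' ({X | frob X ≤ t i} ∩ Pset A B)) =
        μH[(Δ : ℝ)] (matEuclid n '' ({X | frob X ≤ t i} ∩ Pset B B))) :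
    ∃ P : Matrix (Fin n) (Fin n) ℝ, IsPermMatrix P ∧ B = P * A * Pᵀ := by
  classical
  have hn1 : 1 ≤ n := by omega
  have hcast : ((n:ℝ)) ≠ 0 := Nat.cast_ne_zero.mpr (by omega)
  have h2R : (2:ℝ) ≤ (n:ℝ) := by exact_mod_cast hn
  have hn1R : (0:ℝ) ≤ (n:ℝ) - 1 := by linarith
  have hRpos : 0 < Real.sqrt ((n:ℝ) - 1) := Real.sqrt_pos.mpr (by linarith)
  by_cases hc : ∃ X ∈ Pset A B, frob X = Real.sqrt ((n:ℝ) - 1)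
  · obtain ⟨X, hX, hfX⟩ := hc
    have hsq : ∑ i, ∑ j, (X i j)^2 = (n:ℝ) - 1 := by
      rw [frob_eq_sqrt_sum] at hfX
      have hnn : 0 ≤ ∑ i, ∑ j, (X i j)^2 := by positivity
      have := congrArg (fun x : ℝ => x^2) hfX
      simpa [Real.sq_sqrt hnn, Real.sq_sqrt hn1R] using this
    have hperm : IsPermMatrix (X + Jmat n) := Pset_perm_of_eq hn1 hX hsq
    have hAX : A * X = X * B := sub_eq_zero.mp (mem_Pset_iff.mp hX).2.2.1
    have hAP : A * (X + Jmat n) = (X + Jmat n) * B := by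
      rw [Matrix.mul_add, Matrix.add_mul, hAX, mul_J_eq_J_mul hBsym hArow hBrow]
    refine ⟨(X + Jmat n)ᵀ, perm_transpose hperm, ?_⟩
    have h1 : (X + Jmat n)ᵀ * (A * (X + Jmat n)) = (X + Jmat n)ᵀ * ((X + Jmat n) * B) := by
      rw [hAP]
    rw [← Matrix.mul_assoc, ← Matrix.mul_assoc, perm_transpose_mul hperm, Matrix.one_mul] at h1
    rw [Matrix.transpose_transpose]
    exact h1.symm
  · exfalso
    push_neg at hc
    set K1 : Set (EuclideanSpace ℝ (Fin n × Fin n)) := matEuclid n '' Pset A A with hK1def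
    set K2 : Set (EuclideanSpace ℝ (Fin n × Fin n)) := matEuclid n '' Pset A B with hK2def
    set V1 : Submodule ℝ (EuclideanSpace ℝ (Fin n × Fin n)) := Submodule.span ℝ K1 with hV1def
    have hcontE : Continuous (matEuclid n) :=
      (matLE n).toLinearMap.continuous_of_finiteDimensional
    have hK1conv : Convex ℝ K1 := (Pset_convex A A).linear_image (matLE n).toLinearMap
    have h0K1 : (0 : EuclideanSpace ℝ (Fin n × Fin n)) ∈ K1 :=
      ⟨0, zero_mem_Pset A A, map_zero (matLE n)⟩
    have hK1V1 : K1 ⊆ (V1 : Set (EuclideanSpace ℝ (Fin n × Fin n))) := Submodule.subset_span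
    have hfr1 : Module.finrank ℝ V1 = Δ := by
      rw [hV1def, hK1def,
        show matEuclid n '' Pset A A = ⇑((matLE n).toLinearMap) '' Pset A A from rfl,
        Submodule.span_image]
      exact (LinearEquiv.finrank_map_eq (matLE n) _).trans hΔAA
    -- the point of norm √(n-1) in K1
    have hzP : (1 - Jmat n) ∈ Pset A A := one_sub_J_mem hn1 hAsym hArow
    have hzK1 : matEuclid n (1 - Jmat n) ∈ K1 := ⟨_, hzP, rfl⟩
    have hznorm : ‖matEuclid n (1 - Jmat n)‖ = Real.sqrt ((n:ℝ) - 1) := by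
      rw [norm_matEuclid, frob_eq_sqrt_sum, one_sub_J_sq hn1]
    -- the maximum of the norm on K2
    have hK2cpt : IsCompact K2 := (Pset_isCompact A B).image hcontE
    have hK2ne : K2.Nonempty := ⟨0, 0, zero_mem_Pset A B, map_zero (matLE n)⟩
    obtain ⟨y0, hy0K, hy0max⟩ := hK2cpt.exists_isMaxOn hK2ne continuous_norm.continuousOn
    have hsR : ‖y0‖ < Real.sqrt ((n:ℝ) - 1) := by
      obtain ⟨X0, hX0, rfl⟩ := hy0K
      rw [norm_matEuclid]
      refine lt_of_le_of_ne ?_ (hc X0 hX0)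
      rw [frob_eq_sqrt_sum]
      exact Real.sqrt_le_sqrt (Pset_sq_sum_le hn1 hX0)
    obtain ⟨i, hi⟩ : ∃ i, ‖y0‖ < t i := (hlim.eventually (eventually_gt_nhds hsR)).exists
    have htij : t i < t (i + 1) := hmono (Nat.lt_succ_self i)
    have hti0 : 0 < t i := (hrange i).1
    have htjR : t (i + 1) < Real.sqrt ((n:ℝ) - 1) := (hrange (i + 1)).2
    set g : ℝ := (t (i + 1) - t i) / 2 with hgdef
    set m : ℝ := (t i + t (i + 1)) / 2 with hmdef
    have hg0 : 0 < g := by rw [hgdef]; linarith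
    have hm0 : 0 < m := by rw [hmdef]; linarith
    have hmtj : m < t (i + 1) := by rw [hmdef]; linarith
    have hmR : m < Real.sqrt ((n:ℝ) - 1) := lt_trans hmtj htjR
    have hmg_lo : m - g = t i := by rw [hmdef, hgdef]; ring
    have hmg_hi : m + g = t (i + 1) := by rw [hmdef, hgdef]; ring
    set lam : ℝ := m / Real.sqrt ((n:ℝ) - 1) with hlamdef
    have hlam0 : 0 < lam := div_pos hm0 hRpos
    have hlam1 : lam < 1 := (div_lt_one hRpos).mpr hmR
    have h1lam : (0:ℝ) < 1 - lam := by linarith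
    -- relative interior point of K1
    obtain ⟨w, hwK1, ε, hε, hball⟩ := exists_relative_interior_pt hK1conv h0K1
    set θ : ℝ := min 1 (g / (‖w‖ + ε + 1)) with hθdef
    have hC0 : (0:ℝ) ≤ ‖w‖ + ε := by positivity
    have hθpos : 0 < θ := lt_min one_pos (by positivity)
    have hθ1 : θ ≤ 1 := min_le_left _ _
    have hθC : θ * (‖w‖ + ε) < g := by
      have h1 : θ ≤ g / (‖w‖ + ε + 1) := min_le_right _ _
      have h2 : θ * (‖w‖ + ε) ≤ (g / (‖w‖ + ε + 1)) * (‖w‖ + ε) :=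
        mul_le_mul_of_nonneg_right h1 hC0
      have h3 : (g / (‖w‖ + ε + 1)) * (‖w‖ + ε) < g := by
        rw [div_mul_eq_mul_div, div_lt_iff₀ (by positivity)]
        nlinarith
      linarith
    have hball1 : ∀ y : EuclideanSpace ℝ (Fin n × Fin n),
        y ∈ (V1 : Set (EuclideanSpace ℝ (Fin n × Fin n))) → dist y (θ • w) < θ * ε → y ∈ K1 := by
      intro y hyV hyd
      have hu : θ⁻¹ • y ∈ K1 := by
        apply hball
        · exact V1.smul_mem _ hyV
        · have heq : θ⁻¹ • y - w = θ⁻¹ • (y - θ • w) := by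
            rw [smul_sub, smul_smul, inv_mul_cancel₀ (ne_of_gt hθpos), one_smul]
          rw [dist_eq_norm, heq, norm_smul, Real.norm_eq_abs,
            abs_of_pos (by positivity : (0:ℝ) < θ⁻¹)]
          calc θ⁻¹ * ‖y - θ • w‖ < θ⁻¹ * (θ * ε) := by
                apply mul_lt_mul_of_pos_left _ (by positivity)
                rw [← dist_eq_norm]; exact hyd
            _ = ε := by field_simp
      have hcomb := hK1conv hu h0K1 (le_of_lt hθpos)
        (by linarith : (0:ℝ) ≤ 1 - θ) (by ring)
      simpa [smul_smul, mul_inv_cancel₀ (ne_of_gt hθpos)] using hcomb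
    set z : EuclideanSpace ℝ (Fin n × Fin n) := matEuclid n (1 - Jmat n) with hzdef
    set q : EuclideanSpace ℝ (Fin n × Fin n) := lam • z + (1 - lam) • (θ • w) with hqdef
    set ρ : ℝ := (1 - lam) * (θ * ε) with hρdef
    have hρ0 : 0 < ρ := by positivity
    have hqV : q ∈ (V1 : Set (EuclideanSpace ℝ (Fin n × Fin n))) :=
      V1.add_mem (V1.smul_mem _ (hK1V1 hzK1)) (V1.smul_mem _ (V1.smul_mem _ (hK1V1 hwK1)))
    have hball2 : ∀ x : EuclideanSpace ℝ (Fin n × Fin n),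
        x ∈ Metric.ball q ρ → x ∈ (V1 : Set (EuclideanSpace ℝ (Fin n × Fin n))) → x ∈ K1 := by
      intro x hxb hxV
      have huV : (1 - lam)⁻¹ • (x - lam • z) ∈ (V1 : Set (EuclideanSpace ℝ (Fin n × Fin n))) :=
        V1.smul_mem _ (V1.sub_mem hxV (V1.smul_mem _ (hK1V1 hzK1)))
      have hud : dist ((1 - lam)⁻¹ • (x - lam • z)) (θ • w) < θ * ε := by
        have hne1 : (1:ℝ) - lam ≠ 0 := ne_of_gt h1lam
        have heq : (1 - lam)⁻¹ • (x - lam • z) - θ • w = (1 - lam)⁻¹ • (x - q) := by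
          rw [hqdef]
          match_scalars <;> (field_simp; try ring)
        rw [dist_eq_norm, heq, norm_smul, Real.norm_eq_abs,
          abs_of_pos (by positivity : (0:ℝ) < (1 - lam)⁻¹)]
        have hxd : ‖x - q‖ < ρ := by rw [← dist_eq_norm]; exact hxb
        calc (1 - lam)⁻¹ * ‖x - q‖ < (1 - lam)⁻¹ * ρ :=
              mul_lt_mul_of_pos_left hxd (by positivity)
          _ = θ * ε := by rw [hρdef]; field_simp
      have huK1 := hball1 _ huV hud
      have hcomb := hK1conv hzK1 huK1 (le_of_lt hlam0) (le_of_lt h1lam) (by ring)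
      have hne1' : (1:ℝ) - lam ≠ 0 := ne_of_gt h1lam
      have hxeq : lam • z + (1 - lam) • ((1 - lam)⁻¹ • (x - lam • z)) = x := by
        match_scalars <;> (field_simp; try ring)
      rwa [hxeq] at hcomb
    have hnormU : ∀ x : EuclideanSpace ℝ (Fin n × Fin n),
        x ∈ Metric.ball q ρ → t i < ‖x‖ ∧ ‖x‖ < t (i + 1) := by
      intro x hxb
      have hqz : ‖q - lam • z‖ ≤ θ * ‖w‖ := by
        have heq : q - lam • z = (1 - lam) • (θ • w) := by rw [hqdef]; abel
        rw [heq, norm_smul, norm_smul, Real.norm_eq_abs, Real.norm_eq_abs,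
          abs_of_pos h1lam, abs_of_pos hθpos]
        nlinarith [mul_nonneg hθpos.le (norm_nonneg w), hlam0.le, norm_nonneg w]
      have hxd : ‖x - q‖ < ρ := by rw [← dist_eq_norm]; exact hxb
      have hρle : ρ ≤ θ * ε := by
        rw [hρdef]
        nlinarith
      have h1 : ‖x - lam • z‖ < g := by
        calc ‖x - lam • z‖ ≤ ‖x - q‖ + ‖q - lam • z‖ := by
              have : x - lam • z = (x - q) + (q - lam • z) := by abel
              rw [this]; exact norm_add_le _ _
          _ < θ * ε + θ * ‖w‖ := by linarith
          _ = θ * (‖w‖ + ε) := by ring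
          _ < g := hθC
      have hlz : ‖lam • z‖ = m := by
        rw [norm_smul, Real.norm_eq_abs, abs_of_pos hlam0, hznorm, hlamdef]
        field_simp
      have habs : |‖x‖ - ‖lam • z‖| ≤ ‖x - lam • z‖ := abs_norm_sub_norm_le x (lam • z)
      rw [hlz] at habs
      rw [abs_le] at habs
      constructor
      · rw [← hmg_lo]; linarith
      · rw [← hmg_hi]; linarith
    -- measure theory
    obtain ⟨hfin, hpos⟩ := haus_transfer V1
    rw [hfr1] at hfin hpos
    have hU : 0 < μH[(Δ:ℝ)] (Metric.ball q ρ ∩ (V1 : Set (EuclideanSpace ℝ (Fin n × Fin n)))) :=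
      hpos _ Metric.isOpen_ball ⟨q, Metric.mem_ball_self hρ0, hqV⟩
    have hAi_fin : μH[(Δ:ℝ)] (Metric.closedBall 0 (t i) ∩ K1) < ⊤ :=
      hfin _ (Set.inter_subset_right.trans hK1V1)
        (Metric.isBounded_closedBall.subset Set.inter_subset_left)
    have hvi := (hvol i).1
    have hvj := (hvol (i + 1)).1
    rw [image_frob_ball A A (t i), image_frob_ball A B (t i)] at hvi
    rw [image_frob_ball A A (t (i + 1)), image_frob_ball A B (t (i + 1))] at hvj
    have hK2sub : ∀ c : ℝ, ‖y0‖ < c → Metric.closedBall 0 c ∩ K2 = K2 := by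
      intro c hcb
      apply Set.inter_eq_self_of_subset_right
      intro y hy
      rw [Metric.mem_closedBall, dist_zero_right]
      exact le_trans (hy0max hy) (le_of_lt hcb)
    rw [hK2sub (t i) hi] at hvi
    rw [hK2sub (t (i + 1)) (lt_trans hi htij)] at hvj
    have hmeasU : MeasurableSet (Metric.ball q ρ ∩ (V1 : Set (EuclideanSpace ℝ (Fin n × Fin n)))) :=
      Metric.isOpen_ball.measurableSet.inter
        (Submodule.closed_of_finiteDimensional V1).measurableSet
    have hdisj : Disjoint (Metric.closedBall 0 (t i) ∩ K1)
        (Metric.ball q ρ ∩ (V1 : Set (EuclideanSpace ℝ (Fin n × Fin n)))) := by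
      rw [Set.disjoint_left]
      rintro x ⟨hx1, -⟩ ⟨hx2, -⟩
      have := (hnormU x hx2).1
      rw [Metric.mem_closedBall, dist_zero_right] at hx1
      linarith
    have hsubU : (Metric.closedBall 0 (t i) ∩ K1) ∪
        (Metric.ball q ρ ∩ (V1 : Set (EuclideanSpace ℝ (Fin n × Fin n))))
        ⊆ Metric.closedBall 0 (t (i + 1)) ∩ K1 := by
      rintro x (⟨hx1, hx2⟩ | ⟨hx1, hx2⟩)
      · exact ⟨Metric.closedBall_subset_closedBall (le_of_lt htij) hx1, hx2⟩
      · refine ⟨?_, hball2 x hx1 hx2⟩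
        rw [Metric.mem_closedBall, dist_zero_right]
        exact le_of_lt (hnormU x hx1).2
    have hgrow : μH[(Δ:ℝ)] (Metric.closedBall 0 (t i) ∩ K1)
        + μH[(Δ:ℝ)] (Metric.ball q ρ ∩ (V1 : Set (EuclideanSpace ℝ (Fin n × Fin n))))
        ≤ μH[(Δ:ℝ)] (Metric.closedBall 0 (t (i + 1)) ∩ K1) := by
      rw [← measure_union hdisj hmeasU]
      exact measure_mono hsubU
    rw [hvj, ← hvi] at hgrow
    have hle0 : μH[(Δ:ℝ)] (Metric.ball q ρ ∩ (V1 : Set (EuclideanSpace ℝ (Fin n × Fin n)))) ≤ 0 := by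
      have h := hgrow
      rw [show μH[(Δ:ℝ)] (Metric.closedBall 0 (t i) ∩ K1)
          = μH[(Δ:ℝ)] (Metric.closedBall 0 (t i) ∩ K1) + 0 from (add_zero _).symm] at h
      have h2 := h
      rw [add_zero] at h2
      exact (ENNReal.add_le_add_iff_left (ne_of_lt hAi_fin)).mp (by rw [add_zero]; exact h2)
    exact absurd (le_antisymm hle0 (zero_le)) (ne_of_gt hU)
end
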